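/- arXiv:1410.1126 — 9 statements merged into one kernel-verified Lean document; each statement's English description precedes it below -/
import Mathlib

section
/- For any finite poset P and any positive integer m, the set of lattice points of the (m+1)-st dilation of the chain polytope equals the Minkowski sum of the lattice points of the m-th dilation and the lattice points of the chain polytope itself: (m+1)C(P) ∩ ℤ^N = (mC(P) ∩ ℤ^N) + (C(P) ∩ ℤ^N). -/
open Pointwise

/-- Lattice points of the `t`-th dilation of the chain polytope of a finite poset `P`. -/
def chainPt {P : Type} [PartialOrder P] (t : ℕ) (f : P → ℤ) : Prop :=
  (∀ a, 0 ≤ f a) ∧ ∀ c : List P, c.Chain' (· < ·) → (c.map f).sum ≤ (t : ℤ)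

section Aux
variable {P : Type} [Fintype P] [PartialOrder P]

open Classical in
/-- Fueled "max chain-sum ending at `a`" function. -/
noncomputable def nuAux (f : P → ℤ) : ℕ → P → ℤ
  | 0, a => f a
  | n+1, a => f a +
      (insert 0 ((Finset.univ.filter (· < a)).image (nuAux f n))).max'
        (Finset.insert_nonempty _ _)

open Classical in
lemma chain_sum_le_nuAux (f : P → ℤ) (hf : ∀ x, 0 ≤ f x) :
    ∀ (n : ℕ) (c : List P) (a : P), c.Chain' (· < ·) → c.getLast? = some a →
      c.length ≤ n + 1 → (c.map f).sum ≤ nuAux f n a := by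
  intro n
  induction n with
  | zero =>
    intro c a hc hl hlen
    rcases c.eq_nil_or_concat with rfl | ⟨l, a', rfl⟩
    · simp at hl
    · rw [List.concat_eq_append] at hl hc hlen ⊢
      rw [List.getLast?_concat] at hl
      obtain rfl : a' = a := by simpa using hl
      have : l = [] := by
        rcases l with _ | ⟨x, l⟩
        · rfl
        · simp at hlen
      subst this
      simp [nuAux]
  | succ n ih =>
    intro c a hc hl hlen
    rcases c.eq_nil_or_concat with rfl | ⟨l, a', rfl⟩
    · simp at hl
    · rw [List.concat_eq_append] at hl hc hlen ⊢
      rw [List.getLast?_concat] at hl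
      obtain rfl : a = a' := by simpa using hl.symm
      have hM : (0:ℤ) ≤ (insert 0 ((Finset.univ.filter (· < a)).image (nuAux f n))).max'
          (Finset.insert_nonempty _ _) :=
        Finset.le_max' _ _ (Finset.mem_insert_self _ _)
      rw [List.map_append, List.sum_append]
      simp only [List.map_cons, List.map_nil, List.sum_cons, List.sum_nil, add_zero]
      rcases l.eq_nil_or_concat with rfl | ⟨l', b', rfl⟩
      · simp only [List.map_nil, List.sum_nil, nuAux]
        linarith
      · rw [List.concat_eq_append] at hc hlen ⊢
        rw [List.Chain', List.isChain_append] at hc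
        obtain ⟨hc1, -, hrel⟩ := hc
        have hblt : (l' ++ [b']).getLast? = some b' := List.getLast?_concat
        have hb'a : b' < a := hrel b' (by simp) a rfl
        have hsum : ((l' ++ [b']).map f).sum ≤ nuAux f n b' := by
          apply ih _ _ hc1 hblt
          simp [List.length_append] at hlen ⊢
          omega
        have hmem : nuAux f n b' ∈
            insert 0 ((Finset.univ.filter (· < a)).image (nuAux f n)) := by
          exact Finset.mem_insert_of_mem (Finset.mem_image.mpr
            ⟨b', Finset.mem_filter.mpr ⟨Finset.mem_univ _, hb'a⟩, rfl⟩)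
        have := Finset.le_max' _ _ hmem
        simp only [nuAux]
        linarith

open Classical in
lemma exists_chain_nuAux (f : P → ℤ) :
    ∀ (n : ℕ) (a : P), ∃ c : List P, c.Chain' (· < ·) ∧ c.getLast? = some a ∧
      (c.map f).sum = nuAux f n a := by
  intro n
  induction n with
  | zero => intro a; exact ⟨[a], List.isChain_singleton _, by simp, by simp [nuAux]⟩
  | succ n ih =>
    intro a
    set s := insert 0 ((Finset.univ.filter (· < a)).image (nuAux f n)) with hs
    have hmem := Finset.max'_mem s (Finset.insert_nonempty _ _)
    rw [Finset.mem_insert] at hmem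
    rcases hmem with h0 | himg
    · refine ⟨[a], List.isChain_singleton _, by simp, ?_⟩
      simp [nuAux, ← hs, h0]
    · obtain ⟨b, hb, hbeq⟩ := Finset.mem_image.mp himg
      have hba : b < a := (Finset.mem_filter.mp hb).2
      obtain ⟨c, hc, hl, hsum⟩ := ih b
      refine ⟨c ++ [a], ?_, List.getLast?_concat, ?_⟩
      · rw [List.Chain', List.isChain_append]
        exact ⟨hc, by simp, by intro x hx y hy
                               rw [hl] at hx
                               simp at hx hy; subst hx; subst hy; exact hba⟩
      · rw [List.map_append, List.sum_append]
        simp only [List.map_cons, List.map_nil, List.sum_cons, List.sum_nil, add_zero, nuAux, ← hs]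
        rw [hsum, hbeq]; ring

lemma sum_map_add' (u v : P → ℤ) (c : List P) :
    (c.map (fun x => u x + v x)).sum = (c.map u).sum + (c.map v).sum := by
  induction c with
  | nil => simp
  | cons x t ih => simp only [List.map_cons, List.sum_cons, ih]; ring

lemma sum_map_sub' (u v : P → ℤ) (c : List P) :
    (c.map (fun x => u x - v x)).sum = (c.map u).sum - (c.map v).sum := by
  induction c with
  | nil => simp
  | cons x t ih => simp only [List.map_cons, List.sum_cons, ih]; ring

lemma filter_map_sum (f : P → ℤ) (hf : ∀ x, 0 ≤ f x) (c : List P) :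
    ((c.filter (fun x => decide (1 ≤ f x))).map f).sum = (c.map f).sum := by
  induction c with
  | nil => simp
  | cons x t ih =>
    by_cases h : 1 ≤ f x
    · simp [List.filter_cons, h, ih]
    · have hx0 : f x = 0 := le_antisymm (by omega) (hf x)
      simp [List.filter_cons, h, ih, hx0]

lemma indicator_sum_le_one (Sp : P → Prop) [DecidablePred Sp]
    (hanti : ∀ x y : P, x < y → Sp x → Sp y → False) :
    ∀ c : List P, c.Pairwise (· < ·) →
      ((c.map fun a => if Sp a then (1:ℤ) else 0).sum ≤ 1) := by
  intro c
  induction c with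
  | nil => simp
  | cons x rest ih =>
    intro hc
    rw [List.pairwise_cons] at hc
    obtain ⟨hx, hrest⟩ := hc
    simp only [List.map_cons, List.sum_cons]
    by_cases hxS : Sp x
    · have hz : (rest.map fun a => if Sp a then (1:ℤ) else 0).sum = 0 := by
        apply List.sum_eq_zero
        intro y hy
        obtain ⟨z, hz, rfl⟩ := List.mem_map.mp hy
        have : ¬ Sp z := fun hzS => hanti x z (hx z hz) hxS hzS
        simp [this]
      simp [hxS, hz]
    · have := ih hrest
      simp only [hxS, if_false]
      linarith

end Aux

/-- `(m+1)C(P) ∩ ℤ^N = (mC(P) ∩ ℤ^N) + (C(P) ∩ ℤ^N)` (Minkowski sum of lattice points). -/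
theorem stmt1 (P : Type) [Fintype P] [PartialOrder P] (m : ℕ) (hm : 1 ≤ m) :
    {f : P → ℤ | chainPt (m + 1) f} =
      {f : P → ℤ | chainPt m f} + {f : P → ℤ | chainPt 1 f} := by
  classical
  ext f
  simp only [Set.mem_setOf_eq, Set.mem_add]
  constructor
  · rintro ⟨hf0, hfc⟩
    set N := Fintype.card P with hN
    set ν : P → ℤ := nuAux f N with hν
    set Sp : P → Prop := fun a => 1 ≤ f a ∧ (m:ℤ) + 1 ≤ ν a with hSp
    set e : P → ℤ := fun a => if Sp a then 1 else 0 with he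
    have he0 : ∀ a, 0 ≤ e a := by
      intro a; rw [he]; dsimp only; split <;> norm_num
    have he1 : ∀ a, e a ≤ 1 := by
      intro a; rw [he]; dsimp only; split <;> norm_num
    have hfc' : ∀ c : List P, c.Chain' (· < ·) → (c.map f).sum ≤ (m:ℤ) + 1 := by
      intro c hc; have := hfc c hc; push_cast at this; linarith
    -- the antichain property of Sp
    have hanti : ∀ x y : P, x < y → Sp x → Sp y → False := by
      intro x y hxy hx hy
      obtain ⟨c, hc, hl, hsum⟩ := exists_chain_nuAux f N x
      have hchain : (c ++ [y]).Chain' (· < ·) := by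
        rw [List.Chain', List.isChain_append]
        refine ⟨hc, by simp, ?_⟩
        intro u hu v hv
        rw [hl] at hu
        simp at hu hv; subst hu; subst hv; exact hxy
      have hle := hfc' _ hchain
      rw [List.map_append, List.sum_append] at hle
      simp only [List.map_cons, List.map_nil, List.sum_cons, List.sum_nil, add_zero] at hle
      have h1 := hx.2
      have h2 := hy.1
      rw [← hν] at hsum
      linarith
    -- every chain with big sum meets Sp
    have hmeets : ∀ c : List P, c.Chain' (· < ·) → (m:ℤ) + 1 ≤ (c.map f).sum →
        ∃ x ∈ c, Sp x := by
      intro c hc hsum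
      set c' := c.filter (fun x => decide (1 ≤ f x)) with hc'def
      have hsub : List.Sublist c' c := List.filter_sublist
      have hc'chain : c'.Chain' (· < ·) := hc.sublist hsub
      have hsame : (c'.map f).sum = (c.map f).sum := filter_map_sum f hf0 c
      have hne : c' ≠ [] := by
        intro h
        have h0 : (c.map f).sum = 0 := by rw [← hsame, h]; simp
        rw [h0] at hsum
        have hmpos : (0:ℤ) ≤ m := Int.natCast_nonneg m
        linarith
      set a := c'.getLast hne with ha
      have hl : c'.getLast? = some a := List.getLast?_eq_getLast hne
      have hmem' : a ∈ c' := List.getLast_mem hne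
      have hfa : 1 ≤ f a := by
        have := List.mem_filter.mp hmem'
        simpa using this.2
      have hnodup : c'.Nodup := by
        have hp := List.isChain_iff_pairwise.mp hc'chain
        exact hp.imp (fun h => ne_of_lt h)
      have hlen : c'.length ≤ N + 1 := by
        have := List.Nodup.length_le_card hnodup
        omega
      have hνa : (m:ℤ) + 1 ≤ ν a := by
        have := chain_sum_le_nuAux f hf0 N c' a hc'chain hl hlen
        rw [← hν] at this
        linarith [hsame ▸ this]
      exact ⟨a, hsub.mem hmem', hfa, hνa⟩
    -- decomposition
    set g : P → ℤ := fun a => f a - e a with hg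
    have hg0 : ∀ a, 0 ≤ g a := by
      intro a
      rw [hg, he]; dsimp only
      by_cases h : Sp a
      · rw [if_pos h]; have := h.1; linarith
      · rw [if_neg h]; have := hf0 a; linarith
    have hemem : chainPt 1 e := by
      refine ⟨he0, ?_⟩
      intro c hc
      have := indicator_sum_le_one Sp hanti c (List.isChain_iff_pairwise.mp hc)
      simpa [he] using this
    have hgmem : chainPt m g := by
      refine ⟨hg0, ?_⟩
      intro c hc
      rw [hg]
      rw [sum_map_sub' f e c]
      have hesum0 : 0 ≤ (c.map e).sum := by
        apply List.sum_nonneg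
        intro y hy
        obtain ⟨z, hz, rfl⟩ := List.mem_map.mp hy
        exact he0 z
      by_cases hbig : (m:ℤ) + 1 ≤ (c.map f).sum
      · obtain ⟨x, hxc, hxS⟩ := hmeets c hc hbig
        have hex : (1:ℤ) ≤ (c.map e).sum := by
          have hmem : e x ∈ c.map e := List.mem_map.mpr ⟨x, hxc, rfl⟩
          have := List.single_le_sum (l := c.map e)
            (fun y hy => by obtain ⟨z, hz, rfl⟩ := List.mem_map.mp hy; exact he0 z) _ hmem
          have hex1 : e x = 1 := by rw [he]; dsimp only; rw [if_pos hxS]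
          linarith [hex1 ▸ this]
        have := hfc' c hc
        push_cast
        linarith
      · push_neg at hbig
        push_cast
        linarith
    refine ⟨g, hgmem, e, hemem, ?_⟩
    funext a
    show g a + e a = f a
    rw [hg]; ring
  · rintro ⟨g, ⟨hg0, hgc⟩, e, ⟨he0, hec⟩, rfl⟩
    constructor
    · intro a
      have := hg0 a; have := he0 a
      show 0 ≤ g a + e a
      linarith
    · intro c hc
      have h1 := hgc c hc
      have h2 := hec c hc
      have : (c.map fun x => g x + e x).sum = (c.map g).sum + (c.map e).sum :=
        sum_map_add' g e c
      show (c.map fun x => g x + e x).sum ≤ _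
      rw [this]
      push_cast at h1 h2 ⊢
      linarith
end

section
/- For any finite poset P and any positive integer m, the set of lattice points of the (m+1)-st dilation of the order polytope equals the Minkowski sum of the lattice points of the m-th dilation and the lattice points of the order polytope itself: (m+1)O(P) ∩ ℤ^N = (mO(P) ∩ ℤ^N) + (O(P) ∩ ℤ^N). -/
open Pointwise

/-- Lattice points of the `t`-th dilation of the order polytope of a finite poset `P`. -/
def orderPt {P : Type} [PartialOrder P] (t : ℕ) (f : P → ℤ) : Prop :=
  (∀ a, 0 ≤ f a ∧ f a ≤ (t : ℤ)) ∧ ∀ a b : P, a < b → f a ≤ f b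

/-- `(m+1)O(P) ∩ ℤ^N = (mO(P) ∩ ℤ^N) + (O(P) ∩ ℤ^N)` (Minkowski sum of lattice points). -/
theorem stmt2 (P : Type) [Fintype P] [PartialOrder P] (m : ℕ) (hm : 1 ≤ m) :
    {f : P → ℤ | orderPt (m + 1) f} =
      {f : P → ℤ | orderPt m f} + {f : P → ℤ | orderPt 1 f} := by
  ext f
  simp only [Set.mem_setOf_eq, Set.mem_add, orderPt]
  constructor
  · rintro ⟨hb, hmono⟩
    refine ⟨fun a => min (f a) (m : ℤ), ⟨?_, ?_⟩, fun a => max (f a - (m : ℤ)) 0, ⟨?_, ?_⟩, ?_⟩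
    · intro a
      have := hb a
      constructor <;> [exact le_min this.1 (by positivity); exact min_le_right _ _]
    · intro a b hab
      exact min_le_min (hmono a b hab) le_rfl
    · intro a
      have := hb a
      push_cast at this ⊢
      omega
    · intro a b hab
      exact max_le_max (by linarith [hmono a b hab]) le_rfl
    · funext a
      simp only [Pi.add_apply]
      have := hb a
      omega
  · rintro ⟨g, ⟨hg, hgm⟩, h, ⟨hh, hhm⟩, rfl⟩
    refine ⟨fun a => ?_, fun a b hab => ?_⟩
    · have := hg a; have := hh a
      simp only [Pi.add_apply]
      push_cast
      omega
    · have := hgm a b hab; have := hhm a b hab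
      simp only [Pi.add_apply]
      omega
end

section
/- For any finite poset P, the chain polytope C(P) is a normal lattice polytope: for every m ≥ 1, every lattice point of mC(P) is a sum of m lattice points of C(P). -/
open Classical in
/-- indicator of the set of maximal elements of the support of `f` -/
noncomputable def chainInd {P : Type} [PartialOrder P] (f : P → ℤ) : P → ℤ :=
  fun a => if 1 ≤ f a ∧ ∀ b, a < b → f b ≤ 0 then 1 else 0

section
variable {P : Type} [PartialOrder P] (f : P → ℤ)

lemma chainInd_nonneg (a : P) : 0 ≤ chainInd f a := by
  unfold chainInd; split <;> norm_num

lemma chainInd_le (a : P) : chainInd f a ≤ f a ∨ chainInd f a = 0 := by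
  unfold chainInd; split
  · left; omega
  · right; rfl

lemma sum_chainInd_le_one : ∀ c : List P, c.Pairwise (· < ·) →
    (c.map (chainInd f)).sum ≤ 1 := by
  intro c hc
  induction c with
  | nil => simp
  | cons a l ih =>
    have hal : ∀ b ∈ l, a < b := fun b hb => (List.pairwise_cons.1 hc).1 b hb
    have hl : l.Pairwise (· < ·) := (List.pairwise_cons.1 hc).2
    simp only [List.map_cons, List.sum_cons]
    by_cases h : 1 ≤ f a ∧ ∀ b, a < b → f b ≤ 0
    · have h1 : chainInd f a = 1 := by unfold chainInd; rw [if_pos h]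
      have h2 : (l.map (chainInd f)).sum = 0 := by
        apply List.sum_eq_zero
        intro x hx
        rw [List.mem_map] at hx
        obtain ⟨b, hb, rfl⟩ := hx
        have : f b ≤ 0 := h.2 b (hal b hb)
        unfold chainInd
        rw [if_neg]; rintro ⟨h3, -⟩; omega
      omega
    · have h1 : chainInd f a = 0 := by unfold chainInd; rw [if_neg h]
      have := ih hl
      omega

lemma exists_maxSupp (m : ℕ) (h1 : ∀ a, 0 ≤ f a)
    (h2 : ∀ c : List P, c.Chain' (· < ·) → (c.map f).sum ≤ (m : ℤ) + 1) :
    ∀ c : List P, c.Pairwise (· < ·) → (m : ℤ) + 1 ≤ (c.map f).sum →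
      ∃ a ∈ c, 1 ≤ f a ∧ ∀ b, a < b → f b ≤ 0 := by
  intro c
  induction c using List.reverseRecOn with
  | nil => intro _ h; simp at h; omega
  | append_singleton l a ih =>
    intro hp hsum
    have hla : ∀ x ∈ l, x < a := by
      intro x hx
      have := List.pairwise_append.1 hp
      exact this.2.2 x hx a (by simp)
    have hl : l.Pairwise (· < ·) := (List.pairwise_append.1 hp).1
    rw [List.map_append, List.sum_append] at hsum
    simp only [List.map_cons, List.map_nil, List.sum_cons, List.sum_nil, add_zero] at hsum
    by_cases hfa : 1 ≤ f a
    · refine ⟨a, by simp, hfa, ?_⟩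
      intro b hab
      by_contra hfb
      push_neg at hfb
      have hchain : ((l ++ [a]) ++ [b]).Chain' (· < ·) := by
        apply List.isChain_iff_pairwise.2
        rw [List.pairwise_append]
        refine ⟨hp, List.pairwise_singleton _ _, ?_⟩
        intro x hx y hy
        simp at hy; subst hy
        rcases List.mem_append.1 hx with hx | hx
        · exact lt_trans (hla x hx) hab
        · simp at hx; subst hx; exact hab
      have := h2 _ hchain
      rw [List.map_append, List.sum_append] at this
      simp only [List.map_cons, List.map_nil, List.sum_cons, List.sum_nil, add_zero,
        List.map_append, List.sum_append] at this
      omega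
    · have hfa0 : f a = 0 := le_antisymm (by omega) (h1 a)
      obtain ⟨x, hx, hx2⟩ := ih hl (by omega)
      exact ⟨x, by simp [hx], hx2⟩

lemma step (m : ℕ) (hf : chainPt (m + 1) f) :
    chainPt m (fun a => f a - chainInd f a) ∧ chainPt 1 (chainInd f) := by
  obtain ⟨h1, h2⟩ := hf
  push_cast at h2
  constructor
  · constructor
    · intro a
      have h0 := h1 a
      simp only
      by_cases h : 1 ≤ f a ∧ ∀ b, a < b → f b ≤ 0
      · have h3 := h.1
        unfold chainInd; rw [if_pos h]; omega
      · unfold chainInd; rw [if_neg h]; omega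
    · intro c hc
      have hp : c.Pairwise (· < ·) := List.isChain_iff_pairwise.1 hc
      have hsub : ∀ d : List P, (d.map (fun a => f a - chainInd f a)).sum
          = (d.map f).sum - (d.map (chainInd f)).sum := by
        intro d
        induction d with
        | nil => simp
        | cons x l ih2 => simp only [List.map_cons, List.sum_cons]; rw [ih2]; ring
      rw [hsub]
      by_cases hbig : (m : ℤ) + 1 ≤ (c.map f).sum
      · obtain ⟨a, ha, ha2⟩ := exists_maxSupp f m h1 h2 c hp hbig
        have hind : chainInd f a = 1 := by unfold chainInd; rw [if_pos ha2]
        have hge : 1 ≤ (c.map (chainInd f)).sum := by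
          have hmem : (1 : ℤ) ∈ c.map (chainInd f) := by
            rw [← hind]; exact List.mem_map_of_mem ha
          exact List.single_le_sum (fun x hx => by
            rw [List.mem_map] at hx; obtain ⟨b, _, rfl⟩ := hx
            exact chainInd_nonneg f b) _ hmem
        have := h2 c hc
        omega
      · have h0 : 0 ≤ (c.map (chainInd f)).sum :=
          List.sum_nonneg (fun x hx => by
            rw [List.mem_map] at hx; obtain ⟨b, _, rfl⟩ := hx
            exact chainInd_nonneg f b)
        omega
  · exact ⟨chainInd_nonneg f, fun c hc =>
      sum_chainInd_le_one f c (List.isChain_iff_pairwise.1 hc)⟩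

end

/-- The chain polytope of a finite poset is normal: every lattice point of the `m`-th
dilation is a sum of `m` lattice points of the chain polytope. -/
theorem stmt3 (P : Type) [Fintype P] [PartialOrder P] :
    ∀ m : ℕ, 1 ≤ m → ∀ f : P → ℤ, chainPt m f →
      ∃ g : Fin m → (P → ℤ), (∀ k, chainPt 1 (g k)) ∧ f = ∑ k, g k := by
  have key : ∀ m : ℕ, ∀ f : P → ℤ, chainPt m f →
      ∃ g : Fin m → (P → ℤ), (∀ k, chainPt 1 (g k)) ∧ f = ∑ k, g k := by
    intro m
    induction m with
    | zero =>
      intro f ⟨h1, h2⟩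
      refine ⟨fun k => k.elim0, fun k => k.elim0, ?_⟩
      funext a
      have h2a := h2 [a] (List.isChain_singleton a)
      simp only [List.map_cons, List.map_nil, List.sum_cons, List.sum_nil, add_zero] at h2a
      have := h1 a
      simp only [Finset.univ_eq_empty, Finset.sum_empty, Pi.zero_apply]
      omega
    | succ n ih =>
      intro f hf
      obtain ⟨hrest, hind⟩ := step f n hf
      obtain ⟨g', hg', hsum⟩ := ih _ hrest
      refine ⟨Fin.cons (chainInd f) g', ?_, ?_⟩
      · intro k
        refine Fin.cases ?_ ?_ k
        · exact hind
        · intro i; exact hg' i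
      · rw [Fin.sum_cons, ← hsum]
        funext a
        simp only [Pi.add_apply]
        ring
  intro m _ f hf
  exact key m f hf
end

section
/- For any finite poset P, the order polytope O(P) is a normal lattice polytope: for every m ≥ 1, every lattice point of mO(P) is a sum of m lattice points of O(P). -/
lemma sum_indicator (m : ℕ) (n : ℤ) (h0 : 0 ≤ n) (hm : n ≤ (m : ℤ)) :
    ∑ k : Fin m, (if (k : ℤ) < n then (1 : ℤ) else 0) = n := by
  induction m with
  | zero => simpa using le_antisymm hm h0 |>.symm
  | succ m ih =>
    rw [Fin.sum_univ_castSucc]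
    simp only [Fin.coe_castSucc, Fin.val_last]
    by_cases h : (m : ℤ) < n
    · have hn : n = (m : ℤ) + 1 := le_antisymm (by exact_mod_cast hm) (by omega)
      rw [if_pos h, hn]
      have : ∀ k : Fin m, (if (k : ℤ) < (m : ℤ) + 1 then (1 : ℤ) else 0) = 1 := by
        intro k
        rw [if_pos]
        have := k.isLt
        exact_mod_cast by omega
      rw [hn] at *
      simp [this]
    · rw [if_neg h, add_zero]
      exact ih (by omega)

/-- The order polytope of a finite poset is normal: every lattice point of the `m`-th
dilation is a sum of `m` lattice points of the order polytope. -/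
theorem stmt4 (P : Type) [Fintype P] [PartialOrder P] :
    ∀ m : ℕ, 1 ≤ m → ∀ f : P → ℤ, orderPt m f →
      ∃ g : Fin m → (P → ℤ), (∀ k, orderPt 1 (g k)) ∧ f = ∑ k, g k := by
  intro m _ f hf
  obtain ⟨hbound, hmono⟩ := hf
  refine ⟨fun k a => if (k : ℤ) < f a then 1 else 0, ?_, ?_⟩
  · intro k
    constructor
    · intro a; by_cases h : (k : ℤ) < f a <;> simp [h]
    · intro a b hab
      simp only
      by_cases h : (k : ℤ) < f a
      · rw [if_pos h, if_pos (lt_of_lt_of_le h (hmono a b hab))]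
      · by_cases h' : (k : ℤ) < f b <;> simp [h, h']
  · funext a
    simp only [Finset.sum_apply]
    exact (sum_indicator m (f a) (hbound a).1 (hbound a).2).symm
end

section
/- The poset P_ℓ contains a 5-element subposet {x₁, x₂, x₃, x₄, x₅} with x₁, x₂ > x₃ > x₄, x₅ (the 'X-shape') if and only if ℓ_{i−2} ≥ i+1 and ℓ_{i−1} ≥ i+2. -/
/-- The poset `P_ℓ`: pairs `(k,j)` with `1 ≤ k ≤ i` and `i ≤ j ≤ ℓ k`. -/
def PEl (i : ℕ) (ℓ : ℕ → ℕ) : Type :=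
  {p : ℕ × ℕ // 1 ≤ p.1 ∧ p.1 ≤ i ∧ i ≤ p.2 ∧ p.2 ≤ ℓ p.1}

/-- The partial order on `P_ℓ`: `x_{k₁,j₁} ≥ x_{k₂,j₂}` iff `k₁ ≤ k₂` and `j₁ ≥ j₂`. -/
instance (i : ℕ) (ℓ : ℕ → ℕ) : PartialOrder (PEl i ℓ) where
  le a b := b.1.1 ≤ a.1.1 ∧ a.1.2 ≤ b.1.2
  le_refl a := ⟨le_refl _, le_refl _⟩
  le_trans a b c h1 h2 := ⟨le_trans h2.1 h1.1, le_trans h1.2 h2.2⟩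
  le_antisymm a b h1 h2 := Subtype.ext (Prod.ext_iff.mpr
    ⟨le_antisymm h2.1 h1.1, le_antisymm h1.2 h2.2⟩)

/-- `P_ℓ` contains a 5-element "X-shape" subposet `x₁, x₂ > x₃ > x₄, x₅`
(with `x₁,x₂` incomparable and `x₄,x₅` incomparable) if and only if
`ℓ_{i−2} ≥ i+1` and `ℓ_{i−1} ≥ i+2`. -/
theorem stmt11 (n i : ℕ) (ℓ : ℕ → ℕ) (hi : 3 ≤ i) (hin : i ≤ n)
    (hℓ1 : i - 1 ≤ ℓ 1) (hmono : ∀ k, 1 ≤ k → k < i → ℓ k ≤ ℓ (k + 1)) (hℓn : ℓ i ≤ n) :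
    (∃ x₁ x₂ x₃ x₄ x₅ : PEl i ℓ,
        (¬ x₁ ≤ x₂ ∧ ¬ x₂ ≤ x₁) ∧ (¬ x₄ ≤ x₅ ∧ ¬ x₅ ≤ x₄) ∧
        x₃ < x₁ ∧ x₃ < x₂ ∧ x₄ < x₃ ∧ x₅ < x₃) ↔
      (i + 1 ≤ ℓ (i - 2) ∧ i + 2 ≤ ℓ (i - 1)) := by
  have lmono : ∀ a b : ℕ, 1 ≤ a → a ≤ b → b ≤ i → ℓ a ≤ ℓ b := by
    intro a b ha hab hbi
    induction b with
    | zero => omega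
    | succ m ih =>
      rcases Nat.eq_or_lt_of_le hab with h | h
      · rw [h]
      · exact le_trans (ih (by omega) (by omega)) (hmono m (by omega) (by omega))
  have le_def : ∀ a b : PEl i ℓ, (a ≤ b) ↔ (b.1.1 ≤ a.1.1 ∧ a.1.2 ≤ b.1.2) :=
    fun a b => Iff.rfl
  constructor
  · rintro ⟨x₁, x₂, x₃, x₄, x₅, ⟨h12, h21⟩, ⟨h45, h54⟩, h31, h32, h43, h53⟩
    rw [le_def] at h12 h21 h45 h54
    have e31 := (le_def _ _).mp h31.le
    have e32 := (le_def _ _).mp h32.le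
    have e43 := (le_def _ _).mp h43.le
    have e53 := (le_def _ _).mp h53.le
    obtain ⟨a₁, b₁, c₁, d₁⟩ := x₁.2
    obtain ⟨a₂, b₂, c₂, d₂⟩ := x₂.2
    obtain ⟨a₃, b₃, c₃, d₃⟩ := x₃.2
    obtain ⟨a₄, b₄, c₄, d₄⟩ := x₄.2
    obtain ⟨a₅, b₅, c₅, d₅⟩ := x₅.2
    -- x₃ has small k and large j
    have hk3 : x₃.1.1 ≤ i - 1 := by omega
    have hj3 : i + 1 ≤ x₃.1.2 := by omega
    -- case on which of x₁, x₂ has smaller k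
    have key : ∀ y z : PEl i ℓ, x₃ ≤ y → x₃ ≤ z →
        y.1.1 < z.1.1 → y.1.2 < z.1.2 →
        i + 1 ≤ ℓ (i - 2) ∧ i + 2 ≤ ℓ (i - 1) := by
      intro y z hy hz hk hj
      rw [le_def] at hy hz
      obtain ⟨ay, by', cy, dy⟩ := y.2
      obtain ⟨az, bz, cz, dz⟩ := z.2
      constructor
      · have h1 : ℓ y.1.1 ≤ ℓ (i - 2) := lmono _ _ ay (by omega) (by omega)
        omega
      · have h1 : ℓ z.1.1 ≤ ℓ (i - 1) := lmono _ _ az (by omega) (by omega)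
        omega
    rcases (by omega : (x₁.1.1 < x₂.1.1 ∧ x₁.1.2 < x₂.1.2) ∨
        (x₂.1.1 < x₁.1.1 ∧ x₂.1.2 < x₁.1.2)) with ⟨hk, hj⟩ | ⟨hk, hj⟩
    · exact key x₁ x₂ h31.le h32.le hk hj
    · exact key x₂ x₁ h32.le h31.le hk hj
  · rintro ⟨h1, h2⟩
    have hℓi : ℓ (i - 1) ≤ ℓ i := by
      have h := hmono (i - 1) (by omega) (by omega)
      rwa [show i - 1 + 1 = i by omega] at h
    refine ⟨⟨(i - 2, i + 1), by omega, by omega, by omega, by simpa using h1⟩,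
        ⟨(i - 1, i + 2), by omega, by omega, by omega, by simpa using h2⟩,
        ⟨(i - 1, i + 1), by omega, by omega, by omega, by simp; try omega⟩,
        ⟨(i, i + 1), by omega, by omega, by omega, by simp; try omega⟩,
        ⟨(i - 1, i), by omega, by omega, by omega, by simp; try omega⟩, ?_, ?_, ?_, ?_, ?_, ?_⟩
    · constructor <;> · refine (not_congr (le_def _ _)).mpr ?_; simp; try omega
    · constructor <;> · refine (not_congr (le_def _ _)).mpr ?_; simp; try omega
    · exact lt_iff_le_not_ge.mpr ⟨(le_def _ _).mpr (by simp; try omega),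
        fun h => by have := (le_def _ _).mp h; simp at this; try omega⟩
    · exact lt_iff_le_not_ge.mpr ⟨(le_def _ _).mpr (by simp; try omega),
        fun h => by have := (le_def _ _).mp h; simp at this; try omega⟩
    · exact lt_iff_le_not_ge.mpr ⟨(le_def _ _).mpr (by simp; try omega),
        fun h => by have := (le_def _ _).mp h; simp at this; try omega⟩
    · exact lt_iff_le_not_ge.mpr ⟨(le_def _ _).mpr (by simp; try omega),
        fun h => by have := (le_def _ _).mp h; simp at this; try omega⟩
end

section
/- Let w ∈ S_{n+1} be the minimal-length representative of its coset in S_{n+1}/(S_i × S_{n+1−i}), with associated sequence ℓ_w = (ℓ_1 ≤ ... ≤ ℓ_i). Then the inversion poset R^−_w = w^{-1}(R^−) ∩ R^+, partially ordered by α ≥ β iff α − β is a positive root, is isomorphic as a poset to P_{ℓ_w} via α_{p,q} ↦ x_{p,q}. -/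
/-- `ℓ_k = max({i−1} ∪ {j : i ≤ j ≤ n, w(j+1) < w(k)})`. -/
def ellSeq (n i : ℕ) (w : ℕ → ℕ) (k : ℕ) : ℕ :=
  (insert (i - 1) ((Finset.Icc i n).filter fun j => w (j + 1) < w k)).max'
    (Finset.insert_nonempty _ _)

/-- The inversion set `R⁻_w` of `w ∈ S_{n+1}`: a pair `(p,q)` stands for the positive
root `α_{p,q} = α_p + … + α_q`, which lies in `w⁻¹(R⁻) ∩ R⁺` iff `w(q+1) < w(p)`. -/
def InvRoot (n : ℕ) (w : ℕ → ℕ) : Type :=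
  {p : ℕ × ℕ // 1 ≤ p.1 ∧ p.1 ≤ p.2 ∧ p.2 ≤ n ∧ w (p.2 + 1) < w p.1}

/-- `rootStep a b` means `b − a` is a positive root (for interval roots of type `A_n`):
either `b.1 = a.1` and `a.2 < b.2`, or `b.2 = a.2` and `b.1 < a.1`.  The partial order
`α ≥ β ⇔ α − β ∈ R⁺` on `R⁻_w` is its reflexive-transitive closure. -/
def rootStep {n : ℕ} {w : ℕ → ℕ} (a b : InvRoot n w) : Prop :=
  (b.1.1 = a.1.1 ∧ a.1.2 < b.1.2) ∨ (b.1.2 = a.1.2 ∧ b.1.1 < a.1.1)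

lemma PEl.le_def {i : ℕ} {ℓ : ℕ → ℕ} (a b : PEl i ℓ) :
    a ≤ b ↔ b.1.1 ≤ a.1.1 ∧ a.1.2 ≤ b.1.2 := Iff.rfl

lemma le_ell (n i : ℕ) (w : ℕ → ℕ) (k q : ℕ) (h1 : i ≤ q) (h2 : q ≤ n)
    (h3 : w (q + 1) < w k) : q ≤ ellSeq n i w k :=
  Finset.le_max' _ q (Finset.mem_insert_of_mem (by
    rw [Finset.mem_filter, Finset.mem_Icc]; exact ⟨⟨h1, h2⟩, h3⟩))

lemma ell_mem_or (n i : ℕ) (w : ℕ → ℕ) (k : ℕ) :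
    ellSeq n i w k = i - 1 ∨
      (i ≤ ellSeq n i w k ∧ ellSeq n i w k ≤ n ∧ w (ellSeq n i w k + 1) < w k) := by
  have hm := Finset.max'_mem
    (insert (i - 1) ((Finset.Icc i n).filter fun j => w (j + 1) < w k))
    (Finset.insert_nonempty _ _)
  rw [Finset.mem_insert, Finset.mem_filter, Finset.mem_Icc] at hm
  rcases hm with h | h
  · exact Or.inl h
  · exact Or.inr ⟨h.1.1, h.1.2, h.2⟩

/-- For `w` minimal in its coset of `S_i × S_{n+1-i}`, the inversion poset `R⁻_w`
(ordered by `α ≥ β ⇔ α − β ∈ R⁺`) is isomorphic to the poset `P_{ℓ_w}` via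
`α_{p,q} ↦ x_{p,q}`. -/
theorem stmt14 (n i : ℕ) (hi : 1 ≤ i) (hin : i ≤ n)
    (w : ℕ → ℕ) (hbij : Set.BijOn w (Set.Icc 1 (n + 1)) (Set.Icc 1 (n + 1)))
    (hmin1 : StrictMonoOn w (Set.Icc 1 i))
    (hmin2 : StrictMonoOn w (Set.Icc (i + 1) (n + 1))) :
    ∃ e : InvRoot n w ≃ PEl i (ellSeq n i w),
      (∀ a, (e a).1 = a.1) ∧
      ∀ a b, Relation.ReflTransGen rootStep a b ↔ e a ≤ e b := by
  have hmono1 := hmin1.monotoneOn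
  have hmono2 := hmin2.monotoneOn
  have hmem : ∀ p : ℕ × ℕ,
      (1 ≤ p.1 ∧ p.1 ≤ p.2 ∧ p.2 ≤ n ∧ w (p.2 + 1) < w p.1) ↔
      (1 ≤ p.1 ∧ p.1 ≤ i ∧ i ≤ p.2 ∧ p.2 ≤ ellSeq n i w p.1) := by
    rintro ⟨p, q⟩
    dsimp only
    constructor
    · rintro ⟨h1, h2, h3, h4⟩
      have hpi : p ≤ i := by
        by_contra h
        push_neg at h
        have := hmin2 (a := p) (b := q + 1) ⟨h, by omega⟩ ⟨by omega, by omega⟩ (by omega)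
        omega
      have hiq : i ≤ q := by
        by_contra h
        push_neg at h
        have := hmin1 (a := p) (b := q + 1) ⟨h1, by omega⟩ ⟨by omega, by omega⟩ (by omega)
        omega
      exact ⟨h1, hpi, hiq, le_ell n i w p q hiq h3 h4⟩
    · rintro ⟨h1, h2, h3, h4⟩
      rcases ell_mem_or n i w p with hm | ⟨hm1, hm2, hm3⟩
      · omega
      · refine ⟨h1, by omega, by omega, ?_⟩
        have hw : w (q + 1) ≤ w (ellSeq n i w p + 1) :=
          hmono2 ⟨by omega, by omega⟩ ⟨by omega, by omega⟩ (by omega)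
        omega
  refine ⟨Equiv.subtypeEquivRight hmem, fun a => rfl, fun a b => ?_⟩
  show _ ↔ (b.1.1 ≤ a.1.1 ∧ a.1.2 ≤ b.1.2)
  constructor
  · intro h
    induction h with
    | refl => exact ⟨le_refl _, le_refl _⟩
    | tail _ hstep ih =>
      obtain ⟨ih1, ih2⟩ := ih
      rcases hstep with ⟨h1, h2⟩ | ⟨h1, h2⟩ <;> exact ⟨by omega, by omega⟩
  · rintro ⟨hk, hj⟩
    -- hk : b.1.1 ≤ a.1.1, hj : a.1.2 ≤ b.1.2
    obtain ⟨ha1, ha2, ha3, ha4⟩ := a.2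
    obtain ⟨hb1, hb2, hb3, hb4⟩ := b.2
    have hai : a.1.1 ≤ i := ((hmem a.1).mp a.2).2.1
    have hwba : w b.1.1 ≤ w a.1.1 :=
      hmono1 ⟨hb1, by omega⟩ ⟨ha1, hai⟩ hk
    have hc : 1 ≤ a.1.1 ∧ a.1.1 ≤ b.1.2 ∧ b.1.2 ≤ n ∧ w (b.1.2 + 1) < w a.1.1 :=
      ⟨ha1, by omega, hb3, by omega⟩
    set c : InvRoot n w := ⟨(a.1.1, b.1.2), hc⟩ with hcdef
    have hac : Relation.ReflTransGen rootStep a c := by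
      rcases eq_or_lt_of_le hj with h | h
      · have : a = c := Subtype.ext (Prod.ext_iff.mpr ⟨rfl, h⟩)
        rw [this]
      · exact Relation.ReflTransGen.single (Or.inl ⟨rfl, h⟩)
    have hcb : Relation.ReflTransGen rootStep c b := by
      rcases eq_or_lt_of_le hk with h | h
      · have : c = b := Subtype.ext (Prod.ext_iff.mpr ⟨h.symm, rfl⟩)
        rw [this]
      · exact Relation.ReflTransGen.single (Or.inr ⟨rfl, h⟩)
    exact hac.trans hcb
end

section
/- The map sending a minimal-length coset representative w ∈ S_{n+1}/(S_i × S_{n+1−i}) to its sequence ℓ_w = (ℓ_1, ..., ℓ_i) is a bijection between the set of minimal-length coset representatives and the set of weakly increasing integer sequences (ℓ_1 ≤ ... ≤ ℓ_i) with i−1 ≤ ℓ_1 and ℓ_i ≤ n. -/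
namespace Stmt16Aux

/-- Number of first-block values below the value at second-block position `x`. -/
def C (i : ℕ) (ℓ : ℕ → ℕ) (x : ℕ) : ℕ :=
  ((Finset.Icc 1 i).filter fun k => ℓ k + 2 ≤ x).card

/-- The candidate minimal coset representative. -/
def w (n i : ℕ) (ℓ : ℕ → ℕ) (x : ℕ) : ℕ :=
  if 1 ≤ x ∧ x ≤ i then x + ℓ x + 1 - i
  else if i + 1 ≤ x ∧ x ≤ n + 1 then x - i + C i ℓ x
  else x

lemma w_first (n i : ℕ) (ℓ : ℕ → ℕ) (k : ℕ) (h1 : 1 ≤ k) (h2 : k ≤ i) :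
    w n i ℓ k = k + ℓ k + 1 - i := by
  unfold w; rw [if_pos ⟨h1, h2⟩]

lemma w_second (n i : ℕ) (ℓ : ℕ → ℕ) (p : ℕ) (h1 : i + 1 ≤ p) (h2 : p ≤ n + 1) :
    w n i ℓ p = p - i + C i ℓ p := by
  unfold w
  rw [if_neg (by omega), if_pos ⟨h1, h2⟩]

lemma w_outside (n i : ℕ) (ℓ : ℕ → ℕ) (hin : i ≤ n) (x : ℕ)
    (h : ¬(1 ≤ x ∧ x ≤ n + 1)) : w n i ℓ x = x := by
  unfold w
  rw [if_neg (by omega), if_neg (by omega)]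

section

variable {n i : ℕ} {ℓ : ℕ → ℕ}
variable (hi : 1 ≤ i) (hin : i ≤ n)
variable (hm : ∀ k m, 1 ≤ k → k ≤ m → m ≤ i → ℓ k ≤ ℓ m)
variable (hlb : ∀ k, 1 ≤ k → k ≤ i → i ≤ ℓ k + 1)
variable (hub : ∀ k, 1 ≤ k → k ≤ i → ℓ k ≤ n)

include hi hin hm hlb hub

lemma cmp_lt (k p : ℕ) (hk1 : 1 ≤ k) (hk2 : k ≤ i) (hp1 : i + 1 ≤ p) (hp2 : p ≤ n + 1)
    (h : ℓ k + 2 ≤ p) : w n i ℓ k < w n i ℓ p := by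
  rw [w_first n i ℓ k hk1 hk2, w_second n i ℓ p hp1 hp2]
  have hC : k ≤ C i ℓ p := by
    have hsub : Finset.Icc 1 k ⊆ (Finset.Icc 1 i).filter fun k' => ℓ k' + 2 ≤ p := by
      intro k' hk'
      rw [Finset.mem_Icc] at hk'
      rw [Finset.mem_filter, Finset.mem_Icc]
      have := hm k' k hk'.1 hk'.2 hk2
      exact ⟨⟨hk'.1, by omega⟩, by omega⟩
    have := Finset.card_le_card hsub
    rwa [Nat.card_Icc, Nat.add_sub_cancel] at this
  have := hlb k hk1 hk2
  omega

lemma cmp_gt (k p : ℕ) (hk1 : 1 ≤ k) (hk2 : k ≤ i) (hp1 : i + 1 ≤ p) (hp2 : p ≤ n + 1)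
    (h : p ≤ ℓ k + 1) : w n i ℓ p < w n i ℓ k := by
  rw [w_first n i ℓ k hk1 hk2, w_second n i ℓ p hp1 hp2]
  have hC : C i ℓ p ≤ k - 1 := by
    have hsub : ((Finset.Icc 1 i).filter fun k' => ℓ k' + 2 ≤ p) ⊆ Finset.Icc 1 (k - 1) := by
      intro k' hk'
      rw [Finset.mem_filter, Finset.mem_Icc] at hk'
      rw [Finset.mem_Icc]
      refine ⟨hk'.1.1, ?_⟩
      by_contra hc
      have hkk' : k ≤ k' := by omega
      have := hm k k' hk1 hkk' hk'.1.2
      omega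
    have := Finset.card_le_card hsub
    rwa [Nat.card_Icc, Nat.add_sub_cancel] at this
  have := hlb k hk1 hk2
  omega

lemma mono1 (a b : ℕ) (ha : 1 ≤ a) (hb : b ≤ i) (hab : a < b) :
    w n i ℓ a < w n i ℓ b := by
  rw [w_first n i ℓ a ha (by omega), w_first n i ℓ b (by omega) hb]
  have h1 := hm a b ha (le_of_lt hab) hb
  have h2 := hlb a ha (by omega)
  omega

lemma mono2 (a b : ℕ) (ha : i + 1 ≤ a) (hb : b ≤ n + 1) (hab : a < b) :
    w n i ℓ a < w n i ℓ b := by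
  rw [w_second n i ℓ a ha (by omega), w_second n i ℓ b (by omega) hb]
  have hC : C i ℓ a ≤ C i ℓ b := by
    apply Finset.card_le_card
    intro x hx
    rw [Finset.mem_filter, Finset.mem_Icc] at hx ⊢
    omega
  omega

lemma w_ne (a b : ℕ) (ha1 : 1 ≤ a) (ha2 : a ≤ n + 1) (hb1 : 1 ≤ b) (hb2 : b ≤ n + 1)
    (hab : a < b) : w n i ℓ a ≠ w n i ℓ b := by
  by_cases hbi : b ≤ i
  · exact ne_of_lt (mono1 hi hin hm hlb hub a b ha1 hbi hab)
  · by_cases hai : a ≤ i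
    · by_cases hc : ℓ a + 2 ≤ b
      · exact ne_of_lt (cmp_lt hi hin hm hlb hub a b ha1 hai (by omega) hb2 hc)
      · exact ne_of_gt (cmp_gt hi hin hm hlb hub a b ha1 hai (by omega) hb2 (by omega))
    · exact ne_of_lt (mono2 hi hin hm hlb hub a b (by omega) hb2 hab)

lemma w_mapsTo : Set.MapsTo (w n i ℓ) (Set.Icc 1 (n + 1)) (Set.Icc 1 (n + 1)) := by
  intro x hx
  rw [Set.mem_Icc] at hx ⊢
  by_cases hxi : x ≤ i
  · rw [w_first n i ℓ x hx.1 hxi]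
    have h1 := hlb x hx.1 hxi
    have h2 := hub x hx.1 hxi
    omega
  · rw [w_second n i ℓ x (by omega) hx.2]
    have hC : C i ℓ x ≤ i := by
      have := Finset.card_filter_le (Finset.Icc 1 i) (fun k => ℓ k + 2 ≤ x)
      rwa [Nat.card_Icc, Nat.add_sub_cancel] at this
    omega

lemma w_injOn : Set.InjOn (w n i ℓ) (Set.Icc 1 (n + 1)) := by
  intro a ha b hb hab
  rw [Set.mem_Icc] at ha hb
  rcases lt_trichotomy a b with h | h | h
  · exact absurd hab (w_ne hi hin hm hlb hub a b ha.1 ha.2 hb.1 hb.2 h)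
  · exact h
  · exact absurd hab.symm (w_ne hi hin hm hlb hub b a hb.1 hb.2 ha.1 ha.2 h)

lemma w_bijOn : Set.BijOn (w n i ℓ) (Set.Icc 1 (n + 1)) (Set.Icc 1 (n + 1)) := by
  refine ⟨w_mapsTo hi hin hm hlb hub, w_injOn hi hin hm hlb hub, ?_⟩
  intro v hv
  rw [Set.mem_Icc] at hv
  have himg : (Finset.Icc 1 (n + 1)).image (w n i ℓ) = Finset.Icc 1 (n + 1) := by
    apply Finset.eq_of_subset_of_card_le
    · intro y hy
      rw [Finset.mem_image] at hy
      obtain ⟨x, hx, rfl⟩ := hy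
      rw [Finset.mem_Icc] at hx
      have := w_mapsTo hi hin hm hlb hub (Set.mem_Icc.2 hx)
      rw [Set.mem_Icc] at this
      exact Finset.mem_Icc.2 this
    · rw [Finset.card_image_of_injOn (by rw [Finset.coe_Icc]; exact w_injOn hi hin hm hlb hub)]
  have hv' : v ∈ (Finset.Icc 1 (n + 1)).image (w n i ℓ) := by
    rw [himg, Finset.mem_Icc]; exact hv
  rw [Finset.mem_image] at hv'
  obtain ⟨x, hx, hxe⟩ := hv'
  rw [Finset.mem_Icc] at hx
  exact ⟨x, Set.mem_Icc.2 hx, hxe⟩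

lemma w_ellSeq (k : ℕ) (hk1 : 1 ≤ k) (hk2 : k ≤ i) :
    ellSeq n i (w n i ℓ) k = ℓ k := by
  unfold ellSeq
  apply le_antisymm
  · apply Finset.max'_le
    intro y hy
    rcases Finset.mem_insert.1 hy with rfl | hy
    · have := hlb k hk1 hk2; omega
    · rw [Finset.mem_filter, Finset.mem_Icc] at hy
      by_contra hcon
      push_neg at hcon
      have := cmp_lt hi hin hm hlb hub k (y + 1) hk1 hk2 (by omega) (by omega) (by omega)
      omega
  · apply Finset.le_max'
    by_cases hcase : i ≤ ℓ k
    · apply Finset.mem_insert_of_mem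
      rw [Finset.mem_filter, Finset.mem_Icc]
      exact ⟨⟨hcase, hub k hk1 hk2⟩,
        cmp_gt hi hin hm hlb hub k (ℓ k + 1) hk1 hk2 (by omega)
          (by have := hub k hk1 hk2; omega) (le_refl _)⟩
    · have hlk : ℓ k = i - 1 := by have := hlb k hk1 hk2; omega
      rw [hlk]; exact Finset.mem_insert_self _ _

omit hi hin hm hlb hub

/-- Counting values below `w' k` in the range, for a bijection of `[1, n+1]`. -/
lemma count_lt (n : ℕ) (w' : ℕ → ℕ)
    (hb : Set.BijOn w' (Set.Icc 1 (n + 1)) (Set.Icc 1 (n + 1)))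
    (k : ℕ) (hk1 : 1 ≤ k) (hk2 : k ≤ n + 1) :
    ((Finset.Icc 1 (n + 1)).filter fun x => w' x < w' k).card + 1 = w' k := by
  have hkmem : w' k ∈ Set.Icc 1 (n + 1) := hb.mapsTo (Set.mem_Icc.2 ⟨hk1, hk2⟩)
  rw [Set.mem_Icc] at hkmem
  have himg : ((Finset.Icc 1 (n + 1)).filter fun x => w' x < w' k).image w'
      = (Finset.Icc 1 (n + 1)).filter fun v => v < w' k := by
    ext v
    simp only [Finset.mem_image, Finset.mem_filter, Finset.mem_Icc]
    constructor
    · rintro ⟨x, ⟨hx, hlt⟩, rfl⟩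
      have := hb.mapsTo (Set.mem_Icc.2 hx)
      rw [Set.mem_Icc] at this
      exact ⟨this, hlt⟩
    · rintro ⟨hv, hlt⟩
      obtain ⟨x, hx, rfl⟩ := hb.surjOn (Set.mem_Icc.2 hv)
      rw [Set.mem_Icc] at hx
      exact ⟨x, ⟨hx, hlt⟩, rfl⟩
  have hc : ((Finset.Icc 1 (n + 1)).filter fun x => w' x < w' k).card
      = ((Finset.Icc 1 (n + 1)).filter fun v => v < w' k).card := by
    rw [← himg]
    refine (Finset.card_image_of_injOn (hb.injOn.mono ?_)).symm
    intro x hx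
    simp only [Finset.coe_filter, Set.mem_setOf_eq, Finset.mem_Icc] at hx
    exact Set.mem_Icc.2 hx.1
  rw [hc]
  have heq : (Finset.Icc 1 (n + 1)).filter (fun v => v < w' k) = Finset.Icc 1 (w' k - 1) := by
    ext v
    simp only [Finset.mem_filter, Finset.mem_Icc]
    omega
  rw [heq, Nat.card_Icc]
  omega

lemma split_card (n i : ℕ) (hin : i ≤ n) (q : ℕ → Prop) [DecidablePred q] :
    ((Finset.Icc 1 (n + 1)).filter q).card
      = ((Finset.Icc 1 i).filter q).card + ((Finset.Icc (i + 1) (n + 1)).filter q).card := by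
  have h : Finset.Icc 1 (n + 1) = Finset.Icc 1 i ∪ Finset.Icc (i + 1) (n + 1) := by
    ext x
    simp only [Finset.mem_Icc, Finset.mem_union]
    omega
  rw [h, Finset.filter_union, Finset.card_union_of_disjoint]
  apply Finset.disjoint_filter_filter
  rw [Finset.disjoint_left]
  intro a ha hb
  rw [Finset.mem_Icc] at ha hb
  omega

lemma first_count (i : ℕ) (w' : ℕ → ℕ) (hm1 : StrictMonoOn w' (Set.Icc 1 i))
    (k : ℕ) (hk1 : 1 ≤ k) (hk2 : k ≤ i) :
    ((Finset.Icc 1 i).filter fun x => w' x < w' k).card = k - 1 := by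
  have heq : (Finset.Icc 1 i).filter (fun x => w' x < w' k) = Finset.Icc 1 (k - 1) := by
    ext x
    simp only [Finset.mem_filter, Finset.mem_Icc]
    constructor
    · rintro ⟨⟨h1, h2⟩, hlt⟩
      refine ⟨h1, ?_⟩
      by_contra h
      have hxk : k ≤ x := by omega
      rcases eq_or_lt_of_le hxk with heq | hlt2
      · rw [← heq] at hlt; exact lt_irrefl _ hlt
      · have := hm1 (Set.mem_Icc.2 ⟨hk1, hk2⟩) (Set.mem_Icc.2 ⟨h1, h2⟩) hlt2
        omega
    · rintro ⟨h1, h2⟩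
      have hx : x < k := by omega
      exact ⟨⟨h1, by omega⟩, hm1 (Set.mem_Icc.2 ⟨h1, by omega⟩) (Set.mem_Icc.2 ⟨hk1, hk2⟩) hx⟩
  rw [heq, Nat.card_Icc]
  omega

lemma second_count (n i : ℕ) (w' : ℕ → ℕ) (hm2 : StrictMonoOn w' (Set.Icc (i + 1) (n + 1)))
    (p : ℕ) (hp1 : i + 1 ≤ p) (hp2 : p ≤ n + 1) :
    ((Finset.Icc (i + 1) (n + 1)).filter fun x => w' x < w' p).card = p - i - 1 := by
  have heq : (Finset.Icc (i + 1) (n + 1)).filter (fun x => w' x < w' p)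
      = Finset.Icc (i + 1) (p - 1) := by
    ext x
    simp only [Finset.mem_filter, Finset.mem_Icc]
    constructor
    · rintro ⟨⟨h1, h2⟩, hlt⟩
      refine ⟨h1, ?_⟩
      by_contra h
      have hxp : p ≤ x := by omega
      rcases eq_or_lt_of_le hxp with heq2 | hlt2
      · rw [← heq2] at hlt; exact lt_irrefl _ hlt
      · have := hm2 (Set.mem_Icc.2 ⟨hp1, hp2⟩) (Set.mem_Icc.2 ⟨h1, h2⟩) hlt2
        omega
    · rintro ⟨h1, h2⟩
      have hx : x < p := by omega
      exact ⟨⟨h1, by omega⟩, hm2 (Set.mem_Icc.2 ⟨h1, by omega⟩) (Set.mem_Icc.2 ⟨hp1, hp2⟩) hx⟩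
  rw [heq, Nat.card_Icc]
  omega

/-- From `ellSeq w' k = ℓ k` we compute the number of second-block positions below `w' k`. -/
lemma F_card (n i : ℕ) (ℓ : ℕ → ℕ) (hi : 1 ≤ i) (w' : ℕ → ℕ)
    (hm2 : StrictMonoOn w' (Set.Icc (i + 1) (n + 1)))
    (k : ℕ) (hk1 : 1 ≤ k) (hk2 : k ≤ i) (hlbk : i ≤ ℓ k + 1)
    (hE : ellSeq n i w' k = ℓ k) :
    ((Finset.Icc i n).filter fun j => w' (j + 1) < w' k).card = ℓ k + 1 - i := by
  unfold ellSeq at hE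
  set F := (Finset.Icc i n).filter fun j => w' (j + 1) < w' k with hF
  have hle : ∀ j ∈ F, j ≤ ℓ k := by
    intro j hj
    rw [← hE]
    exact Finset.le_max' _ _ (Finset.mem_insert_of_mem hj)
  by_cases hcase : i ≤ ℓ k
  · have hmem : ℓ k ∈ F := by
      have hmx := Finset.max'_mem (insert (i - 1) F) (Finset.insert_nonempty _ _)
      rw [hE] at hmx
      rcases Finset.mem_insert.1 hmx with h | h
      · omega
      · exact h
    have hFeq : F = Finset.Icc i (ℓ k) := by
      ext j
      constructor
      · intro hj
        have hjle := hle j hj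
        have hj' := (Finset.mem_filter.1 hj).1
        rw [Finset.mem_Icc] at hj' ⊢
        omega
      · intro hj
        rw [Finset.mem_Icc] at hj
        have hjn : j ≤ n := by
          have := (Finset.mem_filter.1 hmem).1
          rw [Finset.mem_Icc] at this
          omega
        rw [hF, Finset.mem_filter, Finset.mem_Icc]
        refine ⟨⟨hj.1, hjn⟩, ?_⟩
        have hmem' := (Finset.mem_filter.1 hmem).2
        have hmono : w' (j + 1) ≤ w' (ℓ k + 1) := by
          rcases eq_or_lt_of_le (by omega : j + 1 ≤ ℓ k + 1) with heq | hlt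
          · rw [heq]
          · have hlkn : ℓ k ≤ n := by
              have := (Finset.mem_filter.1 hmem).1
              rw [Finset.mem_Icc] at this
              exact this.2
            exact le_of_lt (hm2 (Set.mem_Icc.2 ⟨by omega, by omega⟩)
              (Set.mem_Icc.2 ⟨by omega, by omega⟩) hlt)
        omega
    rw [hFeq, Nat.card_Icc]
  · have hFe : F = ∅ := by
      rw [Finset.eq_empty_iff_forall_notMem]
      intro j hj
      have h1 := hle j hj
      have h2 := (Finset.mem_filter.1 hj).1
      rw [Finset.mem_Icc] at h2
      omega
    rw [hFe, Finset.card_empty]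
    omega

end

section

variable {n i : ℕ} {ℓ : ℕ → ℕ}
variable (hi : 1 ≤ i) (hin : i ≤ n)
variable (hm : ∀ k m, 1 ≤ k → k ≤ m → m ≤ i → ℓ k ≤ ℓ m)
variable (hlb : ∀ k, 1 ≤ k → k ≤ i → i ≤ ℓ k + 1)
variable (hub : ∀ k, 1 ≤ k → k ≤ i → ℓ k ≤ n)
variable {w' : ℕ → ℕ}
variable (hb : Set.BijOn w' (Set.Icc 1 (n + 1)) (Set.Icc 1 (n + 1)))
variable (hm1 : StrictMonoOn w' (Set.Icc 1 i))
variable (hm2 : StrictMonoOn w' (Set.Icc (i + 1) (n + 1)))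
variable (hE : ∀ k, 1 ≤ k → k ≤ i → ellSeq n i w' k = ℓ k)

include hi hin hm hlb hub hb hm1 hm2 hE

lemma uniq_first (k : ℕ) (hk1 : 1 ≤ k) (hk2 : k ≤ i) : w' k = w n i ℓ k := by
  rw [w_first n i ℓ k hk1 hk2]
  have h1 := count_lt n w' hb k hk1 (by omega)
  rw [split_card n i hin (fun x => w' x < w' k)] at h1
  rw [first_count i w' hm1 k hk1 hk2] at h1
  have h2 : (Finset.Icc (i + 1) (n + 1)).filter (fun x => w' x < w' k)
      = ((Finset.Icc i n).filter fun j => w' (j + 1) < w' k).image (· + 1) := by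
    ext x
    simp only [Finset.mem_image, Finset.mem_filter, Finset.mem_Icc]
    constructor
    · rintro ⟨⟨hx1, hx2⟩, hlt⟩
      refine ⟨x - 1, ⟨⟨by omega, by omega⟩, ?_⟩, by omega⟩
      rw [Nat.sub_add_cancel (by omega)]
      exact hlt
    · rintro ⟨j, ⟨⟨hj1, hj2⟩, hlt⟩, rfl⟩
      exact ⟨⟨by omega, by omega⟩, hlt⟩
  rw [h2, Finset.card_image_of_injective _ (add_left_injective 1)] at h1
  rw [F_card n i ℓ hi w' hm2 k hk1 hk2 (hlb k hk1 hk2) (hE k hk1 hk2)] at h1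
  have := hlb k hk1 hk2
  omega

lemma uniq_second (p : ℕ) (hp1 : i + 1 ≤ p) (hp2 : p ≤ n + 1) : w' p = w n i ℓ p := by
  -- counting identity for w'
  have h1 := count_lt n w' hb p (by omega) hp2
  rw [split_card n i hin (fun x => w' x < w' p)] at h1
  rw [second_count n i w' hm2 p hp1 hp2] at h1
  have h3 : (Finset.Icc 1 i).filter (fun x => w' x < w' p)
      = (Finset.Icc 1 i).filter (fun x => w n i ℓ x < w' p) := by
    apply Finset.filter_congr
    intro x hx
    rw [Finset.mem_Icc] at hx
    rw [uniq_first hi hin hm hlb hub hb hm1 hm2 hE x hx.1 hx.2]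
  rw [h3] at h1
  -- counting identity for w
  have hwp := w_second n i ℓ p hp1 hp2
  have hCG : C i ℓ p = ((Finset.Icc 1 i).filter fun x => w n i ℓ x < w n i ℓ p).card := by
    unfold C
    congr 1
    apply Finset.filter_congr
    intro x hx
    rw [Finset.mem_Icc] at hx
    constructor
    · intro h
      exact cmp_lt hi hin hm hlb hub x p hx.1 hx.2 hp1 hp2 h
    · intro h
      by_contra hc
      have := cmp_gt hi hin hm hlb hub x p hx.1 hx.2 hp1 hp2 (by omega)
      omega
  -- injectivity of w on first block
  have winj : ∀ a b, 1 ≤ a → a ≤ i → 1 ≤ b → b ≤ i → w n i ℓ a = w n i ℓ b → a = b := by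
    intro a b ha1 ha2 hb1 hb2 heq
    rcases lt_trichotomy a b with h | h | h
    · exact absurd heq (ne_of_lt (mono1 hi hin hm hlb hub a b ha1 hb2 h))
    · exact h
    · exact absurd heq.symm (ne_of_lt (mono1 hi hin hm hlb hub b a hb1 ha2 h))
  -- the two fixed points
  have hfix1 : w' p = p - i + ((Finset.Icc 1 i).filter fun x => w n i ℓ x < w' p).card := by
    omega
  have hfix2 : w n i ℓ p
      = p - i + ((Finset.Icc 1 i).filter fun x => w n i ℓ x < w n i ℓ p).card := by
    rw [hCG] at hwp
    exact hwp
  have hA1 : ∀ x, 1 ≤ x → x ≤ i → w n i ℓ x ≠ w' p := by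
    intro x hx1 hx2
    rw [← uniq_first hi hin hm hlb hub hb hm1 hm2 hE x hx1 hx2]
    intro hc
    have := hb.injOn (Set.mem_Icc.2 ⟨hx1, by omega⟩) (Set.mem_Icc.2 ⟨by omega, hp2⟩) hc
    omega
  have hA2 : ∀ x, 1 ≤ x → x ≤ i → w n i ℓ x ≠ w n i ℓ p := by
    intro x hx1 hx2
    exact w_ne hi hin hm hlb hub x p hx1 (by omega) (by omega) hp2 (by omega)
  -- uniqueness of the fixed point
  have key : ∀ v v' : ℕ,
      v = p - i + ((Finset.Icc 1 i).filter fun x => w n i ℓ x < v).card →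
      v' = p - i + ((Finset.Icc 1 i).filter fun x => w n i ℓ x < v').card →
      (∀ x, 1 ≤ x → x ≤ i → w n i ℓ x ≠ v) → v < v' → False := by
    intro v v' hv hv' hvA hlt
    set A := (Finset.Icc 1 i).filter fun x => w n i ℓ x < v with hAdef
    set B := (Finset.Icc 1 i).filter fun x => w n i ℓ x < v' with hBdef
    have hsub : A ⊆ B := by
      intro x hx
      rw [hAdef, Finset.mem_filter] at hx
      rw [hBdef, Finset.mem_filter]
      exact ⟨hx.1, by omega⟩
    have hcard : (B \ A).card + A.card = B.card := Finset.card_sdiff_add_card_eq_card hsub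
    have hScard : (B \ A).card = v' - v := by omega
    have himgsub : (B \ A).image (w n i ℓ) ⊆ Finset.Icc (v + 1) (v' - 1) := by
      intro y hy
      rw [Finset.mem_image] at hy
      obtain ⟨x, hx, rfl⟩ := hy
      rw [Finset.mem_sdiff, hBdef, hAdef, Finset.mem_filter, Finset.mem_filter,
        Finset.mem_Icc] at hx
      have hx1 := hx.1.1.1
      have hx2 := hx.1.1.2
      have hne := hvA x hx1 hx2
      have hnlt : ¬ w n i ℓ x < v := fun hc => hx.2 ⟨⟨hx1, hx2⟩, hc⟩
      rw [Finset.mem_Icc]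
      omega
    have hinj : ((B \ A).image (w n i ℓ)).card = (B \ A).card := by
      apply Finset.card_image_of_injOn
      intro a ha b hbmem heq
      rw [Finset.coe_sdiff, Set.mem_diff] at ha hbmem
      have ha' := ha.1
      have hb' := hbmem.1
      rw [hBdef, Finset.coe_filter, Set.mem_setOf_eq, Finset.mem_Icc] at ha' hb'
      exact winj a b ha'.1.1 ha'.1.2 hb'.1.1 hb'.1.2 heq
    have hcard2 := Finset.card_le_card himgsub
    rw [hinj, hScard, Nat.card_Icc] at hcard2
    omega
  rcases lt_trichotomy (w' p) (w n i ℓ p) with h | h | h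
  · exact absurd (key (w' p) (w n i ℓ p) hfix1 hfix2 hA1 h) not_false
  · exact h
  · exact absurd (key (w n i ℓ p) (w' p) hfix2 hfix1 hA2 h) not_false

end

end Stmt16Aux

/-- The map `w ↦ ℓ_w` is a bijection between minimal-length coset representatives of
`S_{n+1}/(S_i × S_{n+1−i})` and weakly increasing sequences
`i − 1 ≤ ℓ_1 ≤ … ≤ ℓ_i ≤ n`: for every such sequence there is a unique minimal
representative `w` (a permutation of `{1,…,n+1}`, fixing everything else, with
`w(1) < … < w(i)` and `w(i+1) < … < w(n+1)`) with `ℓ_w = ℓ`. -/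
theorem stmt16 (n i : ℕ) (hi : 1 ≤ i) (hin : i ≤ n)
    (ℓ : ℕ → ℕ) (hℓ1 : i - 1 ≤ ℓ 1)
    (hmono : ∀ k, 1 ≤ k → k < i → ℓ k ≤ ℓ (k + 1)) (hℓn : ℓ i ≤ n) :
    ∃! w : ℕ → ℕ,
      (Set.BijOn w (Set.Icc 1 (n + 1)) (Set.Icc 1 (n + 1)) ∧
        StrictMonoOn w (Set.Icc 1 i) ∧
        StrictMonoOn w (Set.Icc (i + 1) (n + 1)) ∧
        ∀ x, x ∉ Set.Icc 1 (n + 1) → w x = x) ∧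
      ∀ k, 1 ≤ k → k ≤ i → ellSeq n i w k = ℓ k := by
  have hm : ∀ k m, 1 ≤ k → k ≤ m → m ≤ i → ℓ k ≤ ℓ m := by
    intro k m hk hkm
    induction m, hkm using Nat.le_induction with
    | base => intro _; exact le_rfl
    | succ m hkm ih =>
      intro hmi
      exact (ih (by omega)).trans (hmono m (by omega) (by omega))
  have hlb : ∀ k, 1 ≤ k → k ≤ i → i ≤ ℓ k + 1 := by
    intro k hk1 hk2
    have := hm 1 k le_rfl hk1 hk2
    omega
  have hub : ∀ k, 1 ≤ k → k ≤ i → ℓ k ≤ n := by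
    intro k hk1 hk2
    exact (hm k i hk1 hk2 le_rfl).trans hℓn
  refine ⟨Stmt16Aux.w n i ℓ,
    ⟨⟨Stmt16Aux.w_bijOn hi hin hm hlb hub, ?_, ?_, ?_⟩, ?_⟩, ?_⟩
  · intro a ha b hb hab
    rw [Set.mem_Icc] at ha hb
    exact Stmt16Aux.mono1 hi hin hm hlb hub a b ha.1 hb.2 hab
  · intro a ha b hb hab
    rw [Set.mem_Icc] at ha hb
    exact Stmt16Aux.mono2 hi hin hm hlb hub a b ha.1 hb.2 hab
  · intro x hx
    rw [Set.mem_Icc] at hx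
    exact Stmt16Aux.w_outside n i ℓ hin x (by omega)
  · intro k hk1 hk2
    exact Stmt16Aux.w_ellSeq hi hin hm hlb hub k hk1 hk2
  · rintro w' ⟨⟨hb, hm1, hm2, hout⟩, hE⟩
    funext x
    by_cases hx1 : 1 ≤ x ∧ x ≤ i
    · exact Stmt16Aux.uniq_first hi hin hm hlb hub hb hm1 hm2 hE x hx1.1 hx1.2
    · by_cases hx2 : i + 1 ≤ x ∧ x ≤ n + 1
      · exact Stmt16Aux.uniq_second hi hin hm hlb hub hb hm1 hm2 hE x hx2.1 hx2.2
      · rw [Stmt16Aux.w_outside n i ℓ hin x (by omega),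
          hout x (by rw [Set.mem_Icc]; omega)]
end

section
/- In the poset P_ℓ, any two distinct antichains have distinct weights, where the weight of an antichain A ⊆ P_ℓ is the formal sum ∑_{(k,j) ∈ A} α_{k,j} of the corresponding positive roots of type A_n. -/
instance (i : ℕ) (ℓ : ℕ → ℕ) : DecidableEq (PEl i ℓ) :=
  inferInstanceAs (DecidableEq {p : ℕ × ℕ // 1 ≤ p.1 ∧ p.1 ≤ i ∧ i ≤ p.2 ∧ p.2 ≤ ℓ p.1})

lemma PEl.prop1 {i : ℕ} {ℓ : ℕ → ℕ} (a : PEl i ℓ) : 1 ≤ a.1.1 := a.2.1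
lemma PEl.prop2 {i : ℕ} {ℓ : ℕ → ℕ} (a : PEl i ℓ) : a.1.1 ≤ i := a.2.2.1
lemma PEl.prop3 {i : ℕ} {ℓ : ℕ → ℕ} (a : PEl i ℓ) : i ≤ a.1.2 := a.2.2.2.1

/-- In an antichain, an element maximizing the first coordinate strictly dominates
every other element in both coordinates. -/
lemma PEl.maxdom {i : ℕ} {ℓ : ℕ → ℕ} {C : Finset (PEl i ℓ)}
    (hC : IsAntichain (· ≤ ·) (C : Set (PEl i ℓ))) {a : PEl i ℓ} (ha : a ∈ C)
    (hmax : ∀ p ∈ C, p.1.1 ≤ a.1.1) :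
    ∀ p ∈ C, p ≠ a → p.1.1 < a.1.1 ∧ p.1.2 < a.1.2 := by
  intro p hp hne
  have h1 : ¬ a ≤ p := hC (Finset.mem_coe.mpr ha) (Finset.mem_coe.mpr hp) (Ne.symm hne)
  have h2 : ¬ p ≤ a := hC (Finset.mem_coe.mpr hp) (Finset.mem_coe.mpr ha) hne
  rw [PEl.le_def] at h1 h2
  push_neg at h1 h2
  have hj : p.1.2 < a.1.2 := h1 (hmax p hp)
  refine ⟨?_, hj⟩
  by_contra hc
  push_neg at hc
  have := h2 hc
  omega

lemma PEl.key (i : ℕ) (ℓ : ℕ → ℕ) (m : ℕ) :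
    ∀ (A B : Finset (PEl i ℓ)), A.card = m →
    IsAntichain (· ≤ ·) (A : Set (PEl i ℓ)) →
    IsAntichain (· ≤ ·) (B : Set (PEl i ℓ)) →
    (∀ r : ℕ, (A.filter fun p => p.1.1 ≤ r ∧ r ≤ p.1.2).card =
      (B.filter fun p => p.1.1 ≤ r ∧ r ≤ p.1.2).card) →
    A = B := by
  have hfull : ∀ C : Finset (PEl i ℓ), C.filter (fun p => p.1.1 ≤ i ∧ i ≤ p.1.2) = C :=
    fun C => Finset.filter_true_of_mem (fun p _ => ⟨p.prop2, p.prop3⟩)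
  have hfiltk : ∀ (C : Finset (PEl i ℓ)) (r : ℕ), r ≤ i →
      C.filter (fun p => p.1.1 ≤ r ∧ r ≤ p.1.2) = C.filter (fun p => p.1.1 ≤ r) := by
    intro C r hr
    exact Finset.filter_congr (fun p _ => and_iff_left (hr.trans p.prop3))
  have hfiltj : ∀ (C : Finset (PEl i ℓ)) (r : ℕ), i ≤ r →
      C.filter (fun p => p.1.1 ≤ r ∧ r ≤ p.1.2) = C.filter (fun p => r ≤ p.1.2) := by
    intro C r hr
    exact Finset.filter_congr (fun p _ => and_iff_right (p.prop2.trans hr))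
  induction m with
  | zero =>
    intro A B hcard hA hB hwt
    have h0 := hwt i
    rw [hfull, hfull, hcard] at h0
    rw [Finset.card_eq_zero.mp hcard, (Finset.card_eq_zero.mp h0.symm)]
  | succ m ih =>
    intro A B hcard hA hB hwt
    have hAB : A.card = B.card := by
      have h0 := hwt i; rwa [hfull, hfull] at h0
    obtain ⟨a, haA, hamax⟩ := A.exists_max_image (fun p => p.1.1) (by
      rw [← Finset.card_pos, hcard]; omega)
    have hstrict := PEl.maxdom hA haA hamax
    -- all of B has first coordinate ≤ a.1.1
    have hBle : ∀ q ∈ B, q.1.1 ≤ a.1.1 := by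
      have h1 := hwt a.1.1
      rw [hfiltk A _ a.prop2, hfiltk B _ a.prop2,
        Finset.filter_true_of_mem hamax] at h1
      have : B.filter (fun p => p.1.1 ≤ a.1.1) = B :=
        Finset.eq_of_subset_of_card_le (Finset.filter_subset _ _) (by omega)
      intro q hq
      rw [← this] at hq
      exact (Finset.mem_filter.mp hq).2
    -- some element of B has first coordinate = a.1.1
    have herA : A.filter (fun p => p.1.1 ≤ a.1.1 - 1) = A.erase a := by
      ext p
      simp only [Finset.mem_filter, Finset.mem_erase]
      constructor
      · rintro ⟨hp, hle⟩
        refine ⟨fun he => ?_, hp⟩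
        subst he
        have := p.prop1; omega
      · rintro ⟨hne, hp⟩
        have := (hstrict p hp hne).1
        exact ⟨hp, by omega⟩
    have hqex : ∃ q ∈ B, q.1.1 = a.1.1 := by
      by_contra h
      push_neg at h
      have h2 := hwt (a.1.1 - 1)
      have ha1 := a.prop1
      rw [hfiltk A _ (by have := a.prop2; omega), hfiltk B _ (by have := a.prop2; omega),
        herA, Finset.card_erase_of_mem haA, hcard,
        Finset.filter_true_of_mem (fun q hq => by
          have h3 := hBle q hq; have h4 := h q hq; omega)] at h2
      omega
    obtain ⟨q, hqB, hqk⟩ := hqex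
    have hqmax : ∀ p ∈ B, p.1.1 ≤ q.1.1 := fun p hp => hqk ▸ hBle p hp
    have hqstrict := PEl.maxdom hB hqB hqmax
    -- all of B has second coordinate ≤ a.1.2
    have hBj : ∀ p ∈ B, p.1.2 ≤ a.1.2 := by
      have h1 := hwt (a.1.2 + 1)
      rw [hfiltj A _ (by have := a.prop3; omega), hfiltj B _ (by have := a.prop3; omega)] at h1
      have hAempty : A.filter (fun p => a.1.2 + 1 ≤ p.1.2) = ∅ := by
        refine Finset.filter_false_of_mem (fun p hp => ?_)
        by_cases hpe : p = a
        · subst hpe; omega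
        · have := (hstrict p hp hpe).2; omega
      rw [hAempty] at h1
      intro p hp
      have h2 : B.filter (fun p => a.1.2 + 1 ≤ p.1.2) = ∅ :=
        Finset.card_eq_zero.mp h1.symm
      by_contra hc
      have : p ∈ B.filter (fun p => a.1.2 + 1 ≤ p.1.2) :=
        Finset.mem_filter.mpr ⟨hp, by omega⟩
      rw [h2] at this
      exact absurd this (Finset.notMem_empty p)
    -- some element of B has second coordinate ≥ a.1.2
    have hq'ex : ∃ q' ∈ B, a.1.2 ≤ q'.1.2 := by
      have h1 := hwt a.1.2
      rw [hfiltj A _ a.prop3, hfiltj B _ a.prop3] at h1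
      have hAone : A.filter (fun p => a.1.2 ≤ p.1.2) = {a} := by
        ext p
        simp only [Finset.mem_filter, Finset.mem_singleton]
        constructor
        · rintro ⟨hp, hle⟩
          by_contra hpe
          have := (hstrict p hp hpe).2; omega
        · rintro rfl; exact ⟨haA, le_refl _⟩
      rw [hAone, Finset.card_singleton] at h1
      have : (B.filter (fun p => a.1.2 ≤ p.1.2)).Nonempty := by
        rw [← Finset.card_pos]; omega
      obtain ⟨q', hq'⟩ := this
      exact ⟨q', (Finset.mem_filter.mp hq').1, (Finset.mem_filter.mp hq').2⟩
    obtain ⟨q', hq'B, hq'j⟩ := hq'ex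
    have hq'j' : q'.1.2 = a.1.2 := le_antisymm (hBj q' hq'B) hq'j
    have hqq' : q' = q := by
      by_contra hne
      have := (hqstrict q' hq'B hne).2
      have := hBj q hqB
      omega
    have hqa : q = a := Subtype.ext (Prod.ext_iff.mpr ⟨hqk, by rw [← hqq', hq'j']⟩)
    have haB : a ∈ B := hqa ▸ hqB
    -- erase and recurse
    have hwt' : ∀ r : ℕ, ((A.erase a).filter fun p => p.1.1 ≤ r ∧ r ≤ p.1.2).card =
        ((B.erase a).filter fun p => p.1.1 ≤ r ∧ r ≤ p.1.2).card := by
      intro r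
      rw [Finset.filter_erase, Finset.filter_erase,
        Finset.card_erase_eq_ite, Finset.card_erase_eq_ite, hwt r]
      by_cases hPa : a.1.1 ≤ r ∧ r ≤ a.1.2
      · simp [Finset.mem_filter, haA, haB, hPa]
      · simp [Finset.mem_filter, hPa]
    have hAer : IsAntichain (· ≤ ·) ((A.erase a : Finset (PEl i ℓ)) : Set (PEl i ℓ)) :=
      hA.subset (Finset.coe_subset.mpr (Finset.erase_subset _ _))
    have hBer : IsAntichain (· ≤ ·) ((B.erase a : Finset (PEl i ℓ)) : Set (PEl i ℓ)) :=
      hB.subset (Finset.coe_subset.mpr (Finset.erase_subset _ _))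
    have heq := ih (A.erase a) (B.erase a)
      (by rw [Finset.card_erase_of_mem haA, hcard]; omega) hAer hBer hwt'
    calc A = insert a (A.erase a) := (Finset.insert_erase haA).symm
      _ = insert a (B.erase a) := by rw [heq]
      _ = B := Finset.insert_erase haB

/-- Distinct antichains of `P_ℓ` have distinct weights, where the weight of an antichain
`A` is `∑_{(k,j) ∈ A} α_{k,j}`, the `r`-th coordinate of which is the number of
`(k,j) ∈ A` with `k ≤ r ≤ j`. -/
theorem stmt17 (n i : ℕ) (ℓ : ℕ → ℕ) (hi : 1 ≤ i) (hin : i ≤ n)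
    (hℓ1 : i - 1 ≤ ℓ 1) (hmono : ∀ k, 1 ≤ k → k < i → ℓ k ≤ ℓ (k + 1)) (hℓn : ℓ i ≤ n)
    (A B : Finset (PEl i ℓ))
    (hA : IsAntichain (· ≤ ·) (A : Set (PEl i ℓ)))
    (hB : IsAntichain (· ≤ ·) (B : Set (PEl i ℓ)))
    (hwt : ∀ r : ℕ, (A.filter fun p => p.1.1 ≤ r ∧ r ≤ p.1.2).card =
      (B.filter fun p => p.1.1 ≤ r ∧ r ≤ p.1.2).card) :
    A = B :=
  PEl.key i ℓ A.card A B rfl hA hB hwt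
end

section
/- All maximal chains of the poset P_ℓ have the same length if and only if there exists an integer K such that for every j ∈ {1, ..., i}, either ℓ_j − j = K or ℓ_j = ℓ_{j−1} (with ℓ_0 = i−1). -/
/-- A maximal chain in a finite poset: a nonempty saturated chain starting at a minimal
element and ending at a maximal element. -/
def IsMaxChain' {P : Type} [PartialOrder P] (c : List P) : Prop :=
  c ≠ [] ∧ c.Chain' (· ⋖ ·) ∧ (∀ x ∈ c.head?, ∀ q, ¬ q < x) ∧ (∀ x ∈ c.getLast?, ∀ q, ¬ x < q)

section
variable {i : ℕ} {ℓ : ℕ → ℕ}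
lemma pel_le {x y : PEl i ℓ} : x ≤ y ↔ y.1.1 ≤ x.1.1 ∧ x.1.2 ≤ y.1.2 := Iff.rfl
lemma pel_lt {x y : PEl i ℓ} :
    x < y ↔ y.1.1 ≤ x.1.1 ∧ x.1.2 ≤ y.1.2 ∧ ¬(x.1.1 ≤ y.1.1 ∧ y.1.2 ≤ x.1.2) := by
  rw [lt_iff_le_not_ge, pel_le, pel_le]; tauto
lemma lmono (hmono : ∀ k, 1 ≤ k → k < i → ℓ k ≤ ℓ (k + 1)) :
    ∀ a b, 1 ≤ a → a ≤ b → b ≤ i → ℓ a ≤ ℓ b := by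
  intro a b ha hab hbi
  induction b with
  | zero => omega
  | succ b ih =>
    rcases Nat.eq_or_lt_of_le hab with h | h
    · rw [h]
    · exact le_trans (ih (by omega) (by omega)) (hmono b (by omega) (by omega))
lemma covBy_step (hmono : ∀ k, 1 ≤ k → k < i → ℓ k ≤ ℓ (k + 1)) {x y : PEl i ℓ}
    (h : x ⋖ y) :
    (y.1.1 = x.1.1 ∧ y.1.2 = x.1.2 + 1) ∨ (y.1.1 + 1 = x.1.1 ∧ y.1.2 = x.1.2) := by
  obtain ⟨hlt, hnot⟩ := h
  rw [pel_lt] at hlt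
  obtain ⟨hx1, hx2, hx3, hx4⟩ := x.2
  obtain ⟨hy1, hy2, hy3, hy4⟩ := y.2
  by_cases hj : x.1.2 < y.1.2
  · have hzv : x.1.2 + 1 ≤ ℓ x.1.1 :=
      le_trans (by omega) (le_trans hy4 (lmono hmono y.1.1 x.1.1 hy1 hlt.1 hx2))
    set z : PEl i ℓ := ⟨(x.1.1, x.1.2 + 1), by simp; omega⟩ with hz
    have h1 : x < z := pel_lt.mpr (by simp only [hz]; omega)
    have h2 := hnot h1
    rw [pel_lt] at h2
    simp only [hz] at h2
    left
    omega
  · have hk : y.1.1 < x.1.1 := by omega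
    have hzv : x.1.2 ≤ ℓ (x.1.1 - 1) := by
      have : x.1.2 ≤ ℓ y.1.1 := by omega
      exact le_trans this (lmono hmono y.1.1 (x.1.1 - 1) hy1 (by omega) (by omega))
    set z : PEl i ℓ := ⟨(x.1.1 - 1, x.1.2), by simp; omega⟩ with hz
    have h1 : x < z := pel_lt.mpr (by simp only [hz]; omega)
    have h2 := hnot h1
    rw [pel_lt] at h2
    simp only [hz] at h2
    right
    omega
lemma covBy_of_step {x y : PEl i ℓ}
    (h : (y.1.1 = x.1.1 ∧ y.1.2 = x.1.2 + 1) ∨ (y.1.1 + 1 = x.1.1 ∧ y.1.2 = x.1.2)) :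
    x ⋖ y := by
  constructor
  · rw [pel_lt]; omega
  · intro z hz1 hz2
    rw [pel_lt] at hz1 hz2
    omega

/-- The rank function. -/
def fZ (x : PEl i ℓ) : ℤ := (x.1.2 : ℤ) - x.1.1

lemma chain_len (hmono : ∀ k, 1 ≤ k → k < i → ℓ k ≤ ℓ (k + 1)) :
    ∀ c : List (PEl i ℓ), c.Chain' (· ⋖ ·) →
      ∀ a ∈ c.head?, ∀ b ∈ c.getLast?, (c.length : ℤ) = fZ b - fZ a + 1 := by
  intro c
  induction c with
  | nil => intro _ a ha; simp at ha
  | cons x xs ih =>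
    intro hch a ha b hb
    simp only [List.head?_cons, Option.mem_def, Option.some.injEq] at ha
    subst ha
    match xs, hch, hb with
    | [], _, hb =>
      simp only [List.getLast?_singleton, Option.mem_def, Option.some.injEq] at hb
      subst hb; simp
    | y :: ys, hch, hb =>
      rw [List.Chain', List.isChain_cons_cons] at hch
      have hb' : b ∈ (y :: ys).getLast? := by
        rwa [List.getLast?_cons_cons] at hb
      have := ih hch.2 y (by simp) b hb'
      have hstep := covBy_step hmono hch.1
      have hf : fZ y = fZ x + 1 := by unfold fZ; omega
      simp only [List.length_cons] at this ⊢
      push_cast at this ⊢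
      omega

lemma min_char (hmono : ∀ k, 1 ≤ k → k < i → ℓ k ≤ ℓ (k + 1)) (x : PEl i ℓ)
    (hmin : ∀ q, ¬ q < x) : x.1.1 = i ∧ x.1.2 = i := by
  obtain ⟨hx1, hx2, hx3, hx4⟩ := x.2
  constructor
  · by_contra h
    have hv : x.1.2 ≤ ℓ (x.1.1 + 1) :=
      le_trans hx4 (lmono hmono x.1.1 (x.1.1 + 1) hx1 (by omega) (by omega))
    set q : PEl i ℓ := ⟨(x.1.1 + 1, x.1.2), by simp; omega⟩ with hq
    exact hmin q (pel_lt.mpr (by simp only [hq]; omega))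
  · by_contra h
    set q : PEl i ℓ := ⟨(x.1.1, x.1.2 - 1), by simp; omega⟩ with hq
    exact hmin q (pel_lt.mpr (by simp only [hq]; omega))

lemma max_char (hmono : ∀ k, 1 ≤ k → k < i → ℓ k ≤ ℓ (k + 1)) (x : PEl i ℓ)
    (hmax : ∀ q, ¬ x < q) : x.1.2 = ℓ x.1.1 ∧ (x.1.1 = 1 ∨ ℓ (x.1.1 - 1) < ℓ x.1.1) := by
  obtain ⟨hx1, hx2, hx3, hx4⟩ := x.2
  have hj : x.1.2 = ℓ x.1.1 := by
    by_contra h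
    set q : PEl i ℓ := ⟨(x.1.1, x.1.2 + 1), by simp; omega⟩ with hq
    exact hmax q (pel_lt.mpr (by simp only [hq]; omega))
  refine ⟨hj, ?_⟩
  by_contra h
  push_neg at h
  obtain ⟨h1, h2⟩ := h
  set q : PEl i ℓ := ⟨(x.1.1 - 1, x.1.2), by simp; omega⟩ with hq
  exact hmax q (pel_lt.mpr (by simp only [hq]; omega))

lemma min_elt (x : PEl i ℓ) (h1 : x.1.1 = i) (h2 : x.1.2 = i) : ∀ q, ¬ q < x := by
  intro q hq
  rw [pel_lt] at hq
  obtain ⟨hq1, hq2, hq3, hq4⟩ := q.2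
  omega

lemma max_elt (hmono : ∀ k, 1 ≤ k → k < i → ℓ k ≤ ℓ (k + 1)) (x : PEl i ℓ)
    (h1 : x.1.2 = ℓ x.1.1) (h2 : ℓ (x.1.1 - 1) < ℓ x.1.1) : ∀ q, ¬ x < q := by
  intro q hq
  rw [pel_lt] at hq
  obtain ⟨hq1, hq2, hq3, hq4⟩ := q.2
  obtain ⟨hx1, hx2, hx3, hx4⟩ := x.2
  rcases Nat.lt_or_ge q.1.1 x.1.1 with h | h
  · have : ℓ q.1.1 ≤ ℓ (x.1.1 - 1) := lmono hmono q.1.1 (x.1.1 - 1) hq1 (by omega) (by omega)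
    omega
  · have he : q.1.1 = x.1.1 := le_antisymm (by omega) h
    rw [he] at hq4
    omega

lemma pel_mk_k (p : ℕ × ℕ) (h) : ((⟨p, h⟩ : PEl i ℓ)).1.1 = p.1 := rfl
lemma pel_mk_j (p : ℕ × ℕ) (h) : ((⟨p, h⟩ : PEl i ℓ)).1.2 = p.2 := rfl

lemma build_chain (hmono : ∀ k, 1 ≤ k → k < i → ℓ k ≤ ℓ (k + 1))
    (j : ℕ) (h1 : 1 ≤ j) (hji : j ≤ i) (hiℓ : i ≤ ℓ j) (hstrict : ℓ (j - 1) < ℓ j) :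
    ∃ c : List (PEl i ℓ), IsMaxChain' c ∧ c.length = ℓ j - j + 1 := by
  have hval : ∀ t : ℕ, 1 ≤ max j (i - t) ∧ max j (i - t) ≤ i ∧
      i ≤ max i (min (j + t) (ℓ j)) ∧ max i (min (j + t) (ℓ j)) ≤ ℓ (max j (i - t)) := by
    intro t
    have h2 : ℓ j ≤ ℓ (max j (i - t)) := lmono hmono j _ h1 (by omega) (by omega)
    omega
  set g : ℕ → PEl i ℓ := fun t => ⟨(max j (i - t), max i (min (j + t) (ℓ j))), hval t⟩ with hg
  have hgk : ∀ t, (g t).1.1 = max j (i - t) := fun t => rfl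
  have hgj : ∀ t, (g t).1.2 = max i (min (j + t) (ℓ j)) := fun t => rfl
  refine ⟨(List.range (ℓ j - j + 1)).map g, ⟨?_, ?_, ?_, ?_⟩, ?_⟩
  · simp
  · rw [List.Chain', List.isChain_map, List.isChain_range_succ]
    intro t ht
    apply covBy_of_step
    rw [hgk, hgk, hgj, hgj]
    rcases le_or_gt (t + 1) (i - j) with h | h
    · right; omega
    · left; omega
  · intro x hx q
    rw [List.head?_map] at hx
    have : (List.range (ℓ j - j + 1)).head? = some 0 := by
      simp [List.range_succ_eq_map]
    rw [this] at hx
    simp only [Option.map_some, Option.mem_def, Option.some.injEq] at hx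
    subst hx
    exact min_elt (g 0) (by rw [hgk]; omega) (by rw [hgj]; omega) q
  · intro x hx q
    rw [List.getLast?_map] at hx
    have : (List.range (ℓ j - j + 1)).getLast? = some (ℓ j - j) := by
      simp [List.range_succ]
    rw [this] at hx
    simp only [Option.map_some, Option.mem_def, Option.some.injEq] at hx
    subst hx
    have hk : (g (ℓ j - j)).1.1 = j := by rw [hgk]; omega
    have hj2 : (g (ℓ j - j)).1.2 = ℓ j := by rw [hgj]; omega
    exact max_elt hmono (g (ℓ j - j)) (by rw [hj2, hk]) (by rw [hk]; exact hstrict) q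
  · simp
end


/-- All maximal chains of `P_ℓ` have the same length if and only if there is an integer
`K` such that for every `j ∈ {1, …, i}` either `ℓ_j − j = K` or `ℓ_j = ℓ_{j−1}`
(with `ℓ_0 = i − 1`). -/
theorem stmt19 (n i : ℕ) (ℓ : ℕ → ℕ) (hi : 1 ≤ i) (hin : i ≤ n)
    (hℓ0 : ℓ 0 = i - 1) (hℓ1 : i - 1 ≤ ℓ 1)
    (hmono : ∀ k, 1 ≤ k → k < i → ℓ k ≤ ℓ (k + 1)) (hℓn : ℓ i ≤ n) :
    (∀ c c' : List (PEl i ℓ), IsMaxChain' c → IsMaxChain' c' → c.length = c'.length) ↔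
      ∃ K : ℕ, ∀ j, 1 ≤ j → j ≤ i → (ℓ j = K + j ∨ ℓ j = ℓ (j - 1)) := by

  constructor
  · intro hpure
    by_cases hne : i ≤ ℓ i
    · have hex : ∃ j, 1 ≤ j ∧ i ≤ ℓ j := ⟨i, hi, hne⟩
      obtain ⟨j₁, ⟨hj₁1, hj₁ℓ⟩, hj₁min⟩ :
          ∃ j₁, (1 ≤ j₁ ∧ i ≤ ℓ j₁) ∧ ∀ m < j₁, ¬(1 ≤ m ∧ i ≤ ℓ m) :=
        ⟨Nat.find hex, Nat.find_spec hex, fun m hm => Nat.find_min hex hm⟩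
      have hj₁i : j₁ ≤ i := by
        by_contra h
        exact hj₁min i (by omega) ⟨hi, hne⟩
      have hstrict1 : ℓ (j₁ - 1) < ℓ j₁ := by
        rcases Nat.lt_or_ge 1 j₁ with h | h
        · have hm := hj₁min (j₁ - 1) (by omega)
          push_neg at hm
          have := hm (by omega)
          omega
        · have hj : j₁ = 1 := by omega
          rw [hj, hℓ0]
          rw [hj] at hj₁ℓ
          omega
      obtain ⟨c₁, hc₁, hlen₁⟩ := build_chain hmono j₁ hj₁1 hj₁i hj₁ℓ hstrict1
      refine ⟨ℓ j₁ - j₁, ?_⟩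
      intro j hj1 hji
      by_cases heq : ℓ j = ℓ (j - 1)
      · right; exact heq
      · left
        have hstrict : ℓ (j - 1) < ℓ j := by
          rcases Nat.lt_or_ge 1 j with h | h
          · have h2 := hmono (j - 1) (by omega) (by omega)
            have h3 : j - 1 + 1 = j := by omega
            rw [h3] at h2
            omega
          · have hj : j = 1 := by omega
            rw [hj, hℓ0]
            rw [hj, hℓ0] at heq
            omega
        have hiℓj : i ≤ ℓ j := by
          rcases Nat.lt_or_ge 1 j with h | h
          · have h2 : ℓ 1 ≤ ℓ (j - 1) := lmono hmono 1 (j - 1) le_rfl (by omega) (by omega)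
            omega
          · have hj : j = 1 := by omega
            rw [hj]
            rw [hj, hℓ0] at hstrict
            omega
        obtain ⟨c, hc, hlen⟩ := build_chain hmono j hj1 hji hiℓj hstrict
        have := hpure c c₁ hc hc₁
        omega
    · refine ⟨0, ?_⟩
      intro j hj1 hji
      right
      have ha : ℓ 1 ≤ ℓ j := lmono hmono 1 j le_rfl hj1 hji
      have hb : ℓ j ≤ ℓ i := lmono hmono j i hj1 hji le_rfl
      rcases Nat.lt_or_ge 1 j with h | h
      · have hc2 : ℓ 1 ≤ ℓ (j - 1) := lmono hmono 1 (j - 1) le_rfl (by omega) (by omega)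
        have hd : ℓ (j - 1) ≤ ℓ i := lmono hmono (j - 1) i (by omega) (by omega) le_rfl
        omega
      · have hj : j = 1 := by omega
        rw [hj, hℓ0]
        omega
  · rintro ⟨K, hK⟩ c c' hc hc'
    have key : ∀ d : List (PEl i ℓ), IsMaxChain' d → (d.length : ℤ) = K + 1 := by
      intro d hd
      obtain ⟨hdne, hch, hhead, hlast⟩ := hd
      obtain ⟨a, as, rfl⟩ := List.exists_cons_of_ne_nil hdne
      set b := (a :: as).getLast (by simp) with hbdef
      have hbm : (a :: as).getLast? = some b := List.getLast?_eq_getLast _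
      have hlen := chain_len hmono _ hch a (by simp) b hbm
      have hmin := min_char hmono a (hhead a (by simp))
      have hmax := max_char hmono b (hlast b hbm)
      have hbK : ℓ b.1.1 = K + b.1.1 := by
        obtain ⟨hb1, hb2, hb3, hb4⟩ := b.2
        rcases hK b.1.1 hb1 hb2 with h | h
        · exact h
        · exfalso
          rcases hmax.2 with h1 | h1
          · rw [h1] at h hb4
            norm_num at h
            omega
          · omega
      have hfa : fZ a = 0 := by unfold fZ; omega
      have hfb : fZ b = K := by
        have h1 := hmax.1
        unfold fZ
        omega
      rw [hlen, hfa, hfb]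
      ring
    have h1 := key c hc
    have h2 := key c' hc'
    omega
end
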